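/- On a complete graph, for any finitely supported f and all t ≥ 0, the Dirichlet energy of the heat semigroup satisfies Q(P_t f) = ‖Γ(P_t f)‖_{ℓ¹(V,m)} ≤ C ‖f‖_{ℓ²_m} ‖Δf‖_{ℓ²_m}, where C is a universal constant. -/

import Mathlib

open scoped BigOperators
open Filter

/-- The carré du champ operator. -/
noncomputable def gam {V : Type*} (m : V → ℝ) (μ : V → V → ℝ) (f g : V → ℝ) (x : V) : ℝ :=
  (1 / (2 * m x)) * ∑' y, μ x y * (f y - f x) * (g y - g x)

/-- The formal graph Laplacian. -/
noncomputable def lap {V : Type*} (m : V → ℝ) (μ : V → V → ℝ) (f : V → ℝ) (x : V) : ℝ :=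
  (1 / m x) * ∑' y, μ x y * (f y - f x)

/-- The Dirichlet energy `Q(f) = (1/2) ∑_{x,y} μ_{xy} (f y - f x)²`. -/
noncomputable def QN {V : Type*} (μ : V → V → ℝ) (f : V → ℝ) : ℝ :=
  (1 / 2) * ∑' p : V × V, μ p.1 p.2 * (f p.2 - f p.1) ^ 2

/-- The `ℓ²(V,m)` norm. -/
noncomputable def l2n {V : Type*} (m : V → ℝ) (f : V → ℝ) : ℝ :=
  Real.sqrt (∑' x, f x ^ 2 * m x)

/-- The iterated carré du champ `Γ₂(f) = (1/2) Δ Γ(f) - Γ(f, Δ f)`. -/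
noncomputable def gam2 {V : Type*} (m : V → ℝ) (μ : V → V → ℝ) (f : V → ℝ) (x : V) : ℝ :=
  (1 / 2) * lap m μ (fun y => gam m μ f f y) x - gam m μ f (lap m μ f) x

/-! Testing the Green formula against `ψ² g` for a cut-off `ψ` with `Γ(ψ) ≤ ε` and using AM–GM
on the cross term gives the Caccioppoli inequality `∑ ψ² Γ(g) m ≤ 2 ‖g‖ ‖Δg‖ + 4 ε ‖g‖²` whenever
`g, Δg ∈ ℓ²(V,m)`. Letting the cut-offs `η_k` (clamped to `[0,1]`) exhaust the graph gives
`Q(g) ≤ 2 ‖g‖ ‖Δg‖`. For `g = P_t f` with `f` finitely supported, `P_t` is an `ℓ²`-contraction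
commuting with `Δ`, so the right-hand side is at most `2 ‖f‖ ‖Δf‖`. -/

section WeightedGraph

variable {V : Type*} {m : V → ℝ} {μ : V → V → ℝ}

lemma summable_mul_of_support_finite {x : V} (hx : (Function.support (μ x)).Finite)
    (F : V → ℝ) : Summable (fun y => μ x y * F y) :=
  summable_of_hasFiniteSupport (hx.subset (Function.support_mul_subset_left _ _))

lemma summable_sq_mul_of_support_finite {f : V → ℝ} (hf : (Function.support f).Finite) :
    Summable (fun x => f x ^ 2 * m x) :=
  summable_of_hasFiniteSupport (hf.subset fun x hx h => hx (by simp [h]))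

lemma tsum_mul_eq_sum {x : V} {W : Finset V} (hW : ∀ y, μ x y ≠ 0 → y ∈ W) (F : V → ℝ) :
    ∑' y, μ x y * F y = ∑ y ∈ W, μ x y * F y :=
  tsum_eq_sum' fun y hy => hW y (left_ne_zero_of_mul hy)

lemma exists_finset_superset_forall_adj_mem (hlf : ∀ x, (Function.support (μ x)).Finite)
    (S : Finset V) : ∃ W : Finset V, S ⊆ W ∧ ∀ x ∈ S, ∀ y, μ x y ≠ 0 → y ∈ W := by
  classical
  exact ⟨S ∪ S.biUnion fun x => (hlf x).toFinset, Finset.subset_union_left, fun x hx y hy =>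
    Finset.mem_union_right _ (Finset.mem_biUnion.2 ⟨x, hx, (hlf x).mem_toFinset.2 hy⟩)⟩

lemma mul_lap {x : V} (hx : m x ≠ 0) (f : V → ℝ) :
    m x * lap m μ f x = ∑' y, μ x y * (f y - f x) := by
  unfold lap
  field_simp

lemma two_mul_mul_gam_self {x : V} (hx : m x ≠ 0) (f : V → ℝ) :
    2 * m x * gam m μ f f x = ∑' y, μ x y * (f y - f x) ^ 2 := by
  unfold gam
  field_simp

lemma support_lap_finite (hsym : ∀ x y, μ x y = μ y x)
    (hlf : ∀ x, (Function.support (μ x)).Finite) {f : V → ℝ}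
    (hf : (Function.support f).Finite) : (Function.support (lap m μ f)).Finite := by
  refine (hf.union (hf.biUnion fun z _ => hlf z)).subset fun x hx => ?_
  by_contra hout
  simp only [Set.mem_union, Function.mem_support, Set.mem_iUnion, not_or, not_exists,
    not_not] at hout
  refine hx ?_
  unfold lap
  rw [show ∑' y, μ x y * (f y - f x) = ∑' _ : V, (0 : ℝ) from tsum_congr fun y => ?_,
    tsum_zero, mul_zero]
  by_cases hy : f y = 0
  · rw [hy, hout.1, sub_self, mul_zero]
  · rw [hsym, hout.2 y hy, zero_mul]

lemma gam_comp_le {x : V} (hx : 0 < m x) (hnn : ∀ x y, 0 ≤ μ x y)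
    (hlf : (Function.support (μ x)).Finite) {φ : ℝ → ℝ} (hφ : LipschitzWith 1 φ) (f : V → ℝ) :
    gam m μ (φ ∘ f) (φ ∘ f) x ≤ gam m μ f f x := by
  have h2m : (0 : ℝ) < 2 * m x := by positivity
  rw [← mul_le_mul_iff_right₀ h2m, two_mul_mul_gam_self hx.ne', two_mul_mul_gam_self hx.ne']
  refine Summable.tsum_le_tsum (fun y => mul_le_mul_of_nonneg_left ?_ (hnn x y))
    (summable_mul_of_support_finite hlf _) (summable_mul_of_support_finite hlf _)
  have h := hφ.dist_le_mul (f y) (f x)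
  simp only [Real.dist_eq, NNReal.coe_one, one_mul] at h
  simpa only [Function.comp_apply, sq_abs] using pow_le_pow_left₀ (abs_nonneg _) h 2

lemma sum_sum_mul_swap (hsym : ∀ x y, μ x y = μ y x) (W : Finset V) (F : V → V → ℝ) :
    ∑ x ∈ W, ∑ y ∈ W, μ x y * F x y = ∑ x ∈ W, ∑ y ∈ W, μ x y * F y x := by
  rw [Finset.sum_comm]
  exact Finset.sum_congr rfl fun x _ => Finset.sum_congr rfl fun y _ => by rw [hsym]

lemma green_formula_finset (hsym : ∀ x y, μ x y = μ y x) {W : Finset V} {u : V → ℝ}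
    (hW : ∀ x, u x ≠ 0 → ∀ y, μ x y ≠ 0 → y ∈ W) (g : V → ℝ) :
    ∑ x ∈ W, ∑ y ∈ W, μ x y * (u y - u x) * (g y - g x) =
      -2 * ∑ x ∈ W, u x * ∑' y, μ x y * (g y - g x) := by
  have hsplit : ∑ x ∈ W, ∑ y ∈ W, μ x y * (u y - u x) * (g y - g x) =
      ∑ x ∈ W, ∑ y ∈ W, μ x y * (u y * (g y - g x)) -
        ∑ x ∈ W, ∑ y ∈ W, μ x y * (u x * (g y - g x)) := by
    rw [← Finset.sum_sub_distrib]
    refine Finset.sum_congr rfl fun x _ => ?_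
    rw [← Finset.sum_sub_distrib]
    exact Finset.sum_congr rfl fun y _ => by ring
  have hswap : ∑ x ∈ W, ∑ y ∈ W, μ x y * (u y * (g y - g x)) =
      -∑ x ∈ W, ∑ y ∈ W, μ x y * (u x * (g y - g x)) := by
    rw [sum_sum_mul_swap hsym, ← Finset.sum_neg_distrib]
    refine Finset.sum_congr rfl fun x _ => ?_
    rw [← Finset.sum_neg_distrib]
    exact Finset.sum_congr rfl fun y _ => by ring
  have hrow : ∀ x ∈ W, ∑ y ∈ W, μ x y * (u x * (g y - g x)) =
      u x * ∑' y, μ x y * (g y - g x) := by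
    intro x _
    by_cases hx : u x = 0
    · simp [hx]
    · rw [tsum_mul_eq_sum (hW x hx), Finset.mul_sum]
      exact Finset.sum_congr rfl fun y _ => by ring
  rw [hsplit, hswap, Finset.sum_congr rfl hrow]
  ring

-- `(q²b - p²a)(b - a) = q²(b - a)² + a(q - p) · (q + p)(b - a)`, and AM–GM on the last product.
lemma caccioppoli_pointwise (p q a b : ℝ) :
    (3 * q ^ 2 - p ^ 2) / 4 * (b - a) ^ 2 - 2 * a ^ 2 * (q - p) ^ 2 ≤
      (q ^ 2 * b - p ^ 2 * a) * (b - a) := by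
  nlinarith [sq_nonneg ((q + p) * (b - a) + 4 * a * (q - p)), sq_nonneg ((q - p) * (b - a))]

lemma caccioppoli_finset (hsym : ∀ x y, μ x y = μ y x) (hnn : ∀ x y, 0 ≤ μ x y)
    {W : Finset V} {ψ : V → ℝ} (hW : ∀ x, ψ x ≠ 0 → ∀ y, μ x y ≠ 0 → y ∈ W) (g : V → ℝ) :
    ∑ x ∈ W, ∑ y ∈ W, μ x y * (ψ x ^ 2 * (g y - g x) ^ 2) ≤
      -4 * ∑ x ∈ W, ψ x ^ 2 * g x * ∑' y, μ x y * (g y - g x) +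
        4 * ∑ x ∈ W, g x ^ 2 * ∑ y ∈ W, μ x y * (ψ y - ψ x) ^ 2 := by
  set E := ∑ x ∈ W, ∑ y ∈ W, μ x y * (ψ x ^ 2 * (g y - g x) ^ 2)
  have hswap : ∑ x ∈ W, ∑ y ∈ W, μ x y * (ψ y ^ 2 * (g y - g x) ^ 2) = E := by
    rw [sum_sum_mul_swap hsym]
    exact Finset.sum_congr rfl fun x _ => Finset.sum_congr rfl fun y _ => by ring
  have hgreen := green_formula_finset hsym (u := fun x => ψ x ^ 2 * g x) (W := W)
    (fun x hx => hW x fun h => hx (by simp [h])) g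
  have hpt : ∑ x ∈ W, ∑ y ∈ W, μ x y * ((3 * ψ y ^ 2 - ψ x ^ 2) / 4 * (g y - g x) ^ 2 -
        2 * g x ^ 2 * (ψ y - ψ x) ^ 2) ≤
      ∑ x ∈ W, ∑ y ∈ W, μ x y * (ψ y ^ 2 * g y - ψ x ^ 2 * g x) * (g y - g x) :=
    Finset.sum_le_sum fun x _ => Finset.sum_le_sum fun y _ =>
      (mul_le_mul_of_nonneg_left (caccioppoli_pointwise _ _ _ _) (hnn x y)).trans_eq (by ring)
  have hexpand : ∑ x ∈ W, ∑ y ∈ W, μ x y * ((3 * ψ y ^ 2 - ψ x ^ 2) / 4 * (g y - g x) ^ 2 -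
        2 * g x ^ 2 * (ψ y - ψ x) ^ 2) =
      3 / 4 * ∑ x ∈ W, ∑ y ∈ W, μ x y * (ψ y ^ 2 * (g y - g x) ^ 2) - 1 / 4 * E -
        2 * ∑ x ∈ W, g x ^ 2 * ∑ y ∈ W, μ x y * (ψ y - ψ x) ^ 2 := by
    simp only [E, Finset.mul_sum, ← Finset.sum_sub_distrib]
    exact Finset.sum_congr rfl fun x _ => Finset.sum_congr rfl fun y _ => by ring
  linarith

lemma l2n_nonneg (f : V → ℝ) : 0 ≤ l2n m f := Real.sqrt_nonneg _

lemma sum_abs_mul_abs_mul_le_l2n (hm : ∀ x, 0 ≤ m x) {f g : V → ℝ}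
    (hf : Summable (fun x => f x ^ 2 * m x)) (hg : Summable (fun x => g x ^ 2 * m x))
    (W : Finset V) : ∑ x ∈ W, |f x| * |g x| * m x ≤ l2n m f * l2n m g := by
  have hsq : ∀ (h : V → ℝ) x, (|h x| * √(m x)) ^ 2 = h x ^ 2 * m x := fun h x => by
    rw [mul_pow, sq_abs, Real.sq_sqrt (hm x)]
  have hpart : ∀ h : V → ℝ, Summable (fun x => h x ^ 2 * m x) →
      √(∑ x ∈ W, (|h x| * √(m x)) ^ 2) ≤ l2n m h := fun h hh => by
    simp only [hsq]
    exact Real.sqrt_le_sqrt (hh.sum_le_tsum W fun x _ => mul_nonneg (sq_nonneg _) (hm x))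
  calc ∑ x ∈ W, |f x| * |g x| * m x = ∑ x ∈ W, (|f x| * √(m x)) * (|g x| * √(m x)) :=
        Finset.sum_congr rfl fun x _ => by
          rw [mul_mul_mul_comm, Real.mul_self_sqrt (hm x)]
    _ ≤ √(∑ x ∈ W, (|f x| * √(m x)) ^ 2) * √(∑ x ∈ W, (|g x| * √(m x)) ^ 2) :=
        Real.sum_mul_le_sqrt_mul_sqrt _ _ _
    _ ≤ l2n m f * l2n m g :=
        mul_le_mul (hpart f hf) (hpart g hg) (Real.sqrt_nonneg _) (l2n_nonneg f)

lemma neg_sum_sq_mul_mul_lap_le (hm : ∀ x, 0 < m x) {ψ g : V → ℝ} (hψ : ∀ x, ψ x ^ 2 ≤ 1)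
    (hg : Summable (fun x => g x ^ 2 * m x))
    (hΔg : Summable (fun x => lap m μ g x ^ 2 * m x)) (W : Finset V) :
    -∑ x ∈ W, ψ x ^ 2 * g x * ∑' y, μ x y * (g y - g x) ≤ l2n m g * l2n m (lap m μ g) := by
  refine le_trans ?_ (sum_abs_mul_abs_mul_le_l2n (fun x => (hm x).le) hg hΔg W)
  rw [← Finset.sum_neg_distrib]
  refine Finset.sum_le_sum fun x _ => ?_
  rw [← mul_lap (hm x).ne']
  calc -(ψ x ^ 2 * g x * (m x * lap m μ g x))
      ≤ |ψ x ^ 2 * (g x * lap m μ g x * m x)| := by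
        rw [show ψ x ^ 2 * g x * (m x * lap m μ g x) = ψ x ^ 2 * (g x * lap m μ g x * m x) by
          ring]
        exact neg_le_abs _
    _ ≤ |g x| * |lap m μ g x| * m x := by
        rw [abs_mul, abs_mul, abs_mul, abs_of_nonneg (hm x).le, abs_of_nonneg (sq_nonneg _)]
        exact mul_le_of_le_one_left
          (mul_nonneg (mul_nonneg (abs_nonneg _) (abs_nonneg _)) (hm x).le) (hψ x)

lemma sum_sq_mul_sum_mul_sub_sq_le (hm : ∀ x, 0 < m x) (hnn : ∀ x y, 0 ≤ μ x y)
    (hlf : ∀ x, (Function.support (μ x)).Finite) {ψ g : V → ℝ} {ε : ℝ} (hε : 0 ≤ ε)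
    (hψε : ∀ x, gam m μ ψ ψ x ≤ ε) (hg : Summable (fun x => g x ^ 2 * m x)) (W : Finset V) :
    ∑ x ∈ W, g x ^ 2 * ∑ y ∈ W, μ x y * (ψ y - ψ x) ^ 2 ≤ 2 * ε * ∑' x, g x ^ 2 * m x := by
  have hrow : ∀ x, ∑ y ∈ W, μ x y * (ψ y - ψ x) ^ 2 ≤ 2 * ε * m x := fun x => calc
    ∑ y ∈ W, μ x y * (ψ y - ψ x) ^ 2 ≤ ∑' y, μ x y * (ψ y - ψ x) ^ 2 :=
        (summable_mul_of_support_finite (hlf x) _).sum_le_tsum W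
          fun y _ => mul_nonneg (hnn x y) (sq_nonneg _)
    _ = 2 * m x * gam m μ ψ ψ x := (two_mul_mul_gam_self (hm x).ne' ψ).symm
    _ ≤ 2 * ε * m x := by nlinarith [hψε x, hm x]
  calc ∑ x ∈ W, g x ^ 2 * ∑ y ∈ W, μ x y * (ψ y - ψ x) ^ 2
      ≤ ∑ x ∈ W, 2 * ε * (g x ^ 2 * m x) :=
        Finset.sum_le_sum fun x _ =>
          (mul_le_mul_of_nonneg_left (hrow x) (sq_nonneg _)).trans_eq (by ring)
    _ ≤ 2 * ε * ∑' x, g x ^ 2 * m x := by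
        rw [← Finset.mul_sum]
        exact mul_le_mul_of_nonneg_left
          (hg.sum_le_tsum W fun x _ => mul_nonneg (sq_nonneg _) (hm x).le) (by positivity)

lemma sum_sq_mul_gam_mul_le (hm : ∀ x, 0 < m x) (hsym : ∀ x y, μ x y = μ y x)
    (hnn : ∀ x y, 0 ≤ μ x y) (hlf : ∀ x, (Function.support (μ x)).Finite) {ψ g : V → ℝ}
    {ε : ℝ} (hε : 0 ≤ ε) (hψ : (Function.support ψ).Finite) (hψ1 : ∀ x, ψ x ^ 2 ≤ 1)
    (hψε : ∀ x, gam m μ ψ ψ x ≤ ε) (hg : Summable (fun x => g x ^ 2 * m x))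
    (hΔg : Summable (fun x => lap m μ g x ^ 2 * m x)) (T : Finset V) :
    ∑ x ∈ T, ψ x ^ 2 * (gam m μ g g x * m x) ≤
      2 * (l2n m g * l2n m (lap m μ g)) + 4 * ε * ∑' x, g x ^ 2 * m x := by
  classical
  obtain ⟨W, hTW, hW⟩ := exists_finset_superset_forall_adj_mem hlf (T ∪ hψ.toFinset)
  have hcacc := caccioppoli_finset hsym hnn
    (fun x hx => hW x (Finset.mem_union_right _ (hψ.mem_toFinset.2 hx))) g
  have hT : ∑ x ∈ T, ψ x ^ 2 * (gam m μ g g x * m x) ≤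
      1 / 2 * ∑ x ∈ W, ∑ y ∈ W, μ x y * (ψ x ^ 2 * (g y - g x) ^ 2) := by
    rw [Finset.mul_sum]
    refine (Finset.sum_le_sum fun x hx => le_of_eq ?_).trans
      (Finset.sum_le_sum_of_subset_of_nonneg (Finset.union_subset_left hTW) fun x _ _ => ?_)
    · rw [show ψ x ^ 2 * (gam m μ g g x * m x) = 1 / 2 * (ψ x ^ 2 * (2 * m x * gam m μ g g x))
          by ring, two_mul_mul_gam_self (hm x).ne',
        tsum_mul_eq_sum (hW x (Finset.mem_union_left _ hx)), Finset.mul_sum]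
      exact congrArg _ (Finset.sum_congr rfl fun y _ => by ring)
    · exact mul_nonneg (by norm_num) (Finset.sum_nonneg fun y _ =>
        mul_nonneg (hnn x y) (mul_nonneg (sq_nonneg _) (sq_nonneg _)))
  linarith [neg_sum_sq_mul_mul_lap_le hm hψ1 hg hΔg W,
    sum_sq_mul_sum_mul_sub_sq_le hm hnn hlf hε hψε hg W]

lemma sum_gam_mul_le (hm : ∀ x, 0 < m x) (hsym : ∀ x y, μ x y = μ y x)
    (hnn : ∀ x y, 0 ≤ μ x y) (hlf : ∀ x, (Function.support (μ x)).Finite) (η : ℕ → V → ℝ)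
    (hηfin : ∀ k, (Function.support (η k)).Finite)
    (hηlim : ∀ x, Tendsto (fun k => η k x) atTop (nhds 1))
    (hηgam : ∀ k x, 1 ≤ k → gam m μ (η k) (η k) x ≤ 1 / (k : ℝ)) {g : V → ℝ}
    (hg : Summable (fun x => g x ^ 2 * m x)) (hΔg : Summable (fun x => lap m μ g x ^ 2 * m x))
    (T : Finset V) : ∑ x ∈ T, gam m μ g g x * m x ≤ 2 * (l2n m g * l2n m (lap m μ g)) := by
  set clamp : ℝ → ℝ := fun a => max (min a 1) 0
  have hclamp : LipschitzWith 1 clamp := (LipschitzWith.id.min_const 1).max_const 0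
  have hbound : ∀ k : ℕ, 1 ≤ k → ∑ x ∈ T, clamp (η k x) ^ 2 * (gam m μ g g x * m x) ≤
      2 * (l2n m g * l2n m (lap m μ g)) + 4 * (1 / (k : ℝ)) * ∑' x, g x ^ 2 * m x :=
    fun k hk => sum_sq_mul_gam_mul_le hm hsym hnn hlf (ψ := clamp ∘ η k) (by positivity)
      ((hηfin k).subset fun x hx h => hx (by simp [clamp, h]))
      (fun x => (sq_le_one_iff_abs_le_one _).2 (abs_le.2 ⟨by simp [clamp], by simp [clamp]⟩))
      (fun x => (gam_comp_le (hm x) hnn (hlf x) hclamp (η k)).trans (hηgam k x hk)) hg hΔg T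
  have hlhs : Tendsto (fun k => ∑ x ∈ T, clamp (η k x) ^ 2 * (gam m μ g g x * m x)) atTop
      (nhds (∑ x ∈ T, gam m μ g g x * m x)) := by
    refine tendsto_finsetSum _ fun x _ => ?_
    simpa [clamp] using
      (((hclamp.continuous.tendsto 1).comp (hηlim x)).pow 2).mul_const (gam m μ g g x * m x)
  have hrhs : Tendsto (fun k : ℕ => 2 * (l2n m g * l2n m (lap m μ g)) +
      4 * (1 / (k : ℝ)) * ∑' x, g x ^ 2 * m x) atTop
      (nhds (2 * (l2n m g * l2n m (lap m μ g)))) := by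
    simpa using tendsto_const_nhds.add
      (((tendsto_const_div_atTop_nhds_zero_nat 1).const_mul 4).mul_const (∑' x, g x ^ 2 * m x))
  exact le_of_tendsto_of_tendsto hlhs hrhs
    (eventually_atTop.2 ⟨1, fun k hk => hbound k hk⟩)

lemma QN_eq_tsum_gam_mul (hm : ∀ x, 0 < m x) (hnn : ∀ x y, 0 ≤ μ x y)
    (hlf : ∀ x, (Function.support (μ x)).Finite) (g : V → ℝ) :
    QN μ g = ∑' x, gam m μ g g x * m x := by
  set A : V × V → ℝ := fun p => μ p.1 p.2 * (g p.2 - g p.1) ^ 2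
  have hA : 0 ≤ A := fun p => mul_nonneg (hnn _ _) (sq_nonneg _)
  have hrows : ∀ x, Summable fun y => A (x, y) := fun x => summable_mul_of_support_finite (hlf x) _
  -- Tonelli; when `A` is not summable both sides are the junk value `0`.
  have hprod : ∑' p, A p = ∑' x, ∑' y, A (x, y) := by
    by_cases hAs : Summable A
    · exact hAs.tsum_prod' hrows
    · rw [tsum_eq_zero_of_not_summable hAs, tsum_eq_zero_of_not_summable
        fun h => hAs ((summable_prod_of_nonneg hA).2 ⟨hrows, h⟩)]
  rw [QN, hprod, ← tsum_mul_left]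
  refine tsum_congr fun x => ?_
  rw [show gam m μ g g x * m x = 1 / 2 * (2 * m x * gam m μ g g x) by ring,
    two_mul_mul_gam_self (hm x).ne']

end WeightedGraph

theorem stmt8 {V : Type*} (m : V → ℝ) (μ : V → V → ℝ)
    (hm : ∀ x, 0 < m x) (hsym : ∀ x y, μ x y = μ y x)
    (hnn : ∀ x y, 0 ≤ μ x y) (hlf : ∀ x, (Function.support (μ x)).Finite)
    -- completeness of the graph: cut-off functions `η_k`
    (η : ℕ → V → ℝ)
    (hηfin : ∀ k, (Function.support (η k)).Finite)
    (hηlim : ∀ x, Tendsto (fun k => η k x) atTop (nhds 1))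
    (hηgam : ∀ k x, 1 ≤ k → gam m μ (η k) (η k) x ≤ 1 / (k : ℝ))
    -- the heat semigroup `P t = e^{tΔ}` and its standard properties
    (P : ℝ → (V → ℝ) → V → ℝ)
    (hPcomm : ∀ f : V → ℝ, (Function.support f).Finite → ∀ t, P t (lap m μ f) = lap m μ (P t f))
    (hPl2 : ∀ f : V → ℝ, Summable (fun x => f x ^ 2 * m x) → ∀ t, 0 ≤ t →
      Summable (fun x => (P t f x) ^ 2 * m x) ∧ ∑' x, (P t f x) ^ 2 * m x ≤ ∑' x, f x ^ 2 * m x)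
    :
    ∃ C : ℝ, 0 < C ∧ ∀ f : V → ℝ, (Function.support f).Finite → ∀ t, 0 ≤ t →
      QN μ (P t f) = ∑' x, gam m μ (P t f) (P t f) x * m x ∧
      QN μ (P t f) ≤ C * l2n m f * l2n m (lap m μ f) := by
  refine ⟨2, two_pos, fun f hf t ht => ⟨QN_eq_tsum_gam_mul hm hnn hlf _, ?_⟩⟩
  obtain ⟨hg, hgf⟩ := hPl2 f (summable_sq_mul_of_support_finite hf) t ht
  obtain ⟨hΔg, hΔgf⟩ :=
    hPl2 _ (summable_sq_mul_of_support_finite (support_lap_finite hsym hlf hf)) t ht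
  rw [hPcomm f hf t] at hΔg hΔgf
  calc QN μ (P t f) = ∑' x, gam m μ (P t f) (P t f) x * m x := QN_eq_tsum_gam_mul hm hnn hlf _
    _ ≤ 2 * (l2n m (P t f) * l2n m (lap m μ (P t f))) :=
        tsum_le_of_sum_le' (mul_nonneg two_pos.le (mul_nonneg (l2n_nonneg _) (l2n_nonneg _)))
          (sum_gam_mul_le hm hsym hnn hlf η hηfin hηlim hηgam hg hΔg)
    _ ≤ 2 * l2n m f * l2n m (lap m μ f) := by
        rw [mul_assoc]
        exact mul_le_mul_of_nonneg_left (mul_le_mul (Real.sqrt_le_sqrt hgf)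
          (Real.sqrt_le_sqrt hΔgf) (l2n_nonneg _) (l2n_nonneg _)) two_pos.le
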